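/- arXiv:2311.08790 — 3 statements merged into one kernel-verified Lean document; each statement's English description precedes it below -/
import Mathlib

section
/- Let F₀, F₁, …, F_m be smooth vector fields on R^n and γ an integral curve of F₀. Define B₀(t) to be the n×m matrix with columns F₁(γ(t)),…,F_m(γ(t)), A(t) = DF₀(γ(t)), and recursively B_i(t) = B_{i−1}'(t) − A(t)B_{i−1}(t). Then for every i ≥ 0, the j-th column of B_i(t) equals ad^i_{F₀}F_j evaluated at γ(t), where ad_{F₀}G = [F₀,G] and ad^i denotes the i-fold iterated bracket. -/
/-- Lie bracket of two vector fields on ℝⁿ. -/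
noncomputable def lieBracket {n : ℕ} (F G : (Fin n → ℝ) → (Fin n → ℝ)) :
    (Fin n → ℝ) → (Fin n → ℝ) :=
  fun x => fderiv ℝ G x (F x) - fderiv ℝ F x (G x)

/-- Iterated bracket ad^i_{F₀} G. -/
noncomputable def adIter {n : ℕ} (F₀ : (Fin n → ℝ) → (Fin n → ℝ)) :
    ℕ → ((Fin n → ℝ) → (Fin n → ℝ)) → ((Fin n → ℝ) → (Fin n → ℝ))
  | 0, G => G
  | (i + 1), G => lieBracket F₀ (adIter F₀ i G)

lemma lieBracket_contDiff {n : ℕ} {F G : (Fin n → ℝ) → (Fin n → ℝ)}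
    (hF : ContDiff ℝ (⊤ : ℕ∞) F) (hG : ContDiff ℝ (⊤ : ℕ∞) G) :
    ContDiff ℝ (⊤ : ℕ∞) (lieBracket F G) := by
  have h1 : ContDiff ℝ (⊤ : ℕ∞) (fun x => fderiv ℝ G x (F x)) :=
    (hG.fderiv_right le_rfl).clm_apply hF
  have h2 : ContDiff ℝ (⊤ : ℕ∞) (fun x => fderiv ℝ F x (G x)) :=
    (hF.fderiv_right le_rfl).clm_apply hG
  exact h1.sub h2

lemma adIter_contDiff {n : ℕ} {F₀ G : (Fin n → ℝ) → (Fin n → ℝ)}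
    (hF : ContDiff ℝ (⊤ : ℕ∞) F₀) (hG : ContDiff ℝ (⊤ : ℕ∞) G) (i : ℕ) :
    ContDiff ℝ (⊤ : ℕ∞) (adIter F₀ i G) := by
  induction i with
  | zero => exact hG
  | succ i ih => exact lieBracket_contDiff hF ih

/-- With B₀'s columns given by F_j(γ(t)) and B_i = B_{i−1}' − A B_{i−1}
(where A(t) = DF₀(γ(t))), the j-th column of B_i(t) is ad^i_{F₀}F_j (γ(t)). -/
theorem stmt1 {n m : ℕ} (F₀ : (Fin n → ℝ) → (Fin n → ℝ))
    (Fc : Fin m → (Fin n → ℝ) → (Fin n → ℝ))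
    (hF₀ : ContDiff ℝ (⊤ : ℕ∞) F₀) (hFc : ∀ j, ContDiff ℝ (⊤ : ℕ∞) (Fc j))
    (γ : ℝ → (Fin n → ℝ)) (hγ : ∀ t, HasDerivAt γ (F₀ (γ t)) t)
    (Bcol : ℕ → Fin m → ℝ → (Fin n → ℝ))
    (hB0 : ∀ j t, Bcol 0 j t = Fc j (γ t))
    (hBrec : ∀ i j t, Bcol (i + 1) j t
      = deriv (fun s => Bcol i j s) t - fderiv ℝ F₀ (γ t) (Bcol i j t)) :
    ∀ (i : ℕ) (j : Fin m) (t : ℝ), Bcol i j t = adIter F₀ i (Fc j) (γ t) := by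
  intro i
  induction i with
  | zero => intro j t; exact hB0 j t
  | succ i ih =>
    intro j t
    set G := adIter F₀ i (Fc j) with hGdef
    have hGsmooth : ContDiff ℝ (⊤ : ℕ∞) G := adIter_contDiff hF₀ (hFc j) i
    have hcomp : ∀ s, Bcol i j s = G (γ s) := fun s => ih j s
    have hderivG : HasDerivAt (fun s => G (γ s)) (fderiv ℝ G (γ t) (F₀ (γ t))) t := by
      have hfd : HasFDerivAt G (fderiv ℝ G (γ t)) (γ t) :=
        (hGsmooth.differentiable (by simp) (γ t)).hasFDerivAt
      exact hfd.comp_hasDerivAt t (hγ t)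
    have hderiv : deriv (fun s => Bcol i j s) t = fderiv ℝ G (γ t) (F₀ (γ t)) := by
      have : HasDerivAt (fun s => Bcol i j s) (fderiv ℝ G (γ t) (F₀ (γ t))) t := by
        simpa [funext hcomp] using hderivG
      exact this.deriv
    rw [hBrec i j t, hderiv, hcomp t]
    rfl
end

section
/- For the inhibitory mean-field model, at any point (r,V,S) with r ≠ 0, the three vectors F₁ = (0,1,0), [F₀,F₁] = (−2r/τ_m, −2V/τ_m, 0), and ad²_{F₀}F₁ (whose third component is r/(τ_m τ_d)) are linearly independent, i.e. they span R³. -/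
open Real

theorem Matrix.linearIndependent_fin_three_of_ne_zero {K : Type*} [Field K] {a b : K}
    {w : Fin 3 → K} (ha : a ≠ 0) (hw : w 2 ≠ 0) :
    LinearIndependent K ![![0, 1, 0], ![a, b, 0], w] := by
  change LinearIndependent K (Matrix.of ![![0, 1, 0], ![a, b, 0], w]).row
  rw [Matrix.linearIndependent_rows_iff_isUnit, Matrix.isUnit_iff_isUnit_det,
    isUnit_iff_ne_zero, Matrix.det_fin_three]
  simpa using mul_ne_zero ha hw

theorem Submodule.span_fin_three_eq_top_of_linearIndependent {K V : Type*} [DivisionRing K]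
    [AddCommGroup V] [Module K V] [FiniteDimensional K V] (hV : Module.finrank K V = 3)
    {u v w : V} (h : LinearIndependent K ![u, v, w]) :
    Submodule.span K ({u, v, w} : Set V) = ⊤ := by
  rw [← h.span_eq_top_of_card_eq_finrank (by simp [hV]), Matrix.range_cons, Matrix.range_cons,
    Matrix.range_cons, Matrix.range_empty, Set.union_empty, Set.singleton_union,
    Set.singleton_union]

/-- For the inhibitory mean-field model, at a point with r ≠ 0 the three
vectors F₁, [F₀,F₁] and ad²_{F₀}F₁ are linearly independent and span ℝ³. -/
theorem stmt4 (Δ τm τd J I : ℝ) (hτm : τm ≠ 0) (hτd : τd ≠ 0)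
    (r V S : ℝ) (hr : r ≠ 0)
    (v₁ v₂ v₃ : Fin 3 → ℝ)
    (hv₁ : v₁ = ![0, 1, 0])
    (hv₂ : v₂ = ![-2 * r / τm, -2 * V / τm, 0])
    (hv₃ : v₃ = (2 / τm ^ 2) • ![2 * V * r - Δ / (π * τm),
      V ^ 2 - (τm * π * r) ^ 2 + J * τm * S - I, r * τm / (2 * τd)]) :
    LinearIndependent ℝ ![v₁, v₂, v₃] ∧
    Submodule.span ℝ ({v₁, v₂, v₃} : Set (Fin 3 → ℝ)) = ⊤ := by
  have hv₂₀ : -2 * r / τm ≠ 0 := by simp [hr, hτm]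
  have hv₃₂ : v₃ 2 ≠ 0 := by
    rw [hv₃]
    simp [hr, hτm, hτd]
  have hli : LinearIndependent ℝ ![v₁, v₂, v₃] := by
    subst hv₁ hv₂
    exact Matrix.linearIndependent_fin_three_of_ne_zero hv₂₀ hv₃₂
  exact ⟨hli, Submodule.span_fin_three_eq_top_of_linearIndependent (by simp) hli⟩
end

section
/- Consider the time-dependent linear control system x' = A(t)x + B(t)u on [0,t_f] with smooth matrix-valued functions A(t) ∈ M_n(R) and B(t) ∈ M_{n×m}(R). Define B₀ = B and B_i = B_{i−1}' − A B_{i−1}. If there exists t₀ ∈ [0,t_f] such that span{B_i(t₀)ũ : ũ ∈ R^m, i ≥ 0} = R^n, then the system is controllable on [0,t_f]: for every x₀, x_f ∈ R^n there exists u ∈ L^∞([0,t_f], R^m) whose trajectory from x₀ reaches x_f at time t_f. -/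
open Matrix Set

namespace Chang

lemma hasDerivWithinAt_singleton' {E : Type*} [NormedAddCommGroup E] [NormedSpace ℝ E]
    (f : ℝ → E) (x : ℝ) (d : E) : HasDerivWithinAt f d {x} x := by
  simp only [HasDerivWithinAt, HasDerivAtFilter, nhdsWithin_singleton,
    hasFDerivAtFilter_iff_isLittleO, Filter.prod_pure_pure, Asymptotics.isLittleO_pure, sub_self, map_zero]

variable {n : ℕ}

noncomputable def ssum (C : Matrix (Fin n) (Fin n) ℝ) : ℝ := ∑ i, ∑ j, |C i j|

lemma ssum_nonneg (C : Matrix (Fin n) (Fin n) ℝ) : 0 ≤ ssum C := by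
  apply Finset.sum_nonneg; intros; apply Finset.sum_nonneg; intros; positivity

lemma mulVec_norm_le (C : Matrix (Fin n) (Fin n) ℝ) (x : Fin n → ℝ) :
    ‖C *ᵥ x‖ ≤ ssum C * ‖x‖ := by
  rw [pi_norm_le_iff_of_nonneg (mul_nonneg (ssum_nonneg C) (norm_nonneg x))]
  intro i
  have h1 : (C *ᵥ x) i = ∑ j, C i j * x j := by
    simp [Matrix.mulVec, dotProduct]
  rw [Real.norm_eq_abs, h1]
  calc |∑ j, C i j * x j| ≤ ∑ j, |C i j * x j| := Finset.abs_sum_le_sum_abs _ _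
    _ ≤ ∑ j, |C i j| * ‖x‖ := by
        apply Finset.sum_le_sum; intro j _
        rw [abs_mul]
        exact mul_le_mul_of_nonneg_left ((Real.norm_eq_abs _) ▸ norm_le_pi_norm x j) (abs_nonneg _)
    _ = (∑ j, |C i j|) * ‖x‖ := by rw [Finset.sum_mul]
    _ ≤ ssum C * ‖x‖ := by
        apply mul_le_mul_of_nonneg_right _ (norm_nonneg x)
        exact Finset.single_le_sum (f := fun i => ∑ j, |C i j|)
          (fun i _ => Finset.sum_nonneg fun _ _ => abs_nonneg _) (Finset.mem_univ i)

lemma mulVec_lip {K : ℝ} (C : Matrix (Fin n) (Fin n) ℝ) (hK : ssum C ≤ K) :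
    LipschitzWith (Real.toNNReal K) (fun x => C *ᵥ x) := by
  apply LipschitzWith.of_dist_le_mul
  intro x y
  rw [dist_eq_norm, dist_eq_norm, ← mulVec_sub]
  calc ‖C *ᵥ (x - y)‖ ≤ ssum C * ‖x - y‖ := mulVec_norm_le _ _
    _ ≤ K * ‖x - y‖ := mul_le_mul_of_nonneg_right hK (norm_nonneg _)
    _ = Real.toNNReal K * ‖x - y‖ := by
        rw [Real.coe_toNNReal _ ((ssum_nonneg C).trans hK)]

lemma cont_mulVec {C : ℝ → Matrix (Fin n) (Fin n) ℝ}
    (hC : ∀ i j, Continuous fun t => C t i j) (x : Fin n → ℝ) :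
    Continuous fun t => C t *ᵥ x := by
  apply continuous_pi
  intro i
  have : (fun t => (C t *ᵥ x) i) = fun t => ∑ j, C t i j * x j := by
    funext t; simp [Matrix.mulVec, dotProduct]
  rw [this]
  exact continuous_finset_sum _ fun j _ => (hC i j).mul continuous_const

theorem exists_sol (C : ℝ → Matrix (Fin n) (Fin n) ℝ)
    (hC : ∀ i j, Continuous fun t => C t i j) (a b : ℝ) (hab : a ≤ b) (x₀ : Fin n → ℝ) :
    ∃ x : ℝ → Fin n → ℝ, x a = x₀ ∧
      ∀ t ∈ Icc a b, HasDerivWithinAt x (C t *ᵥ x t) (Icc a b) t := by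
  have hCc : Continuous fun t => ssum (C t) := by
    apply continuous_finset_sum; intro i _
    exact continuous_finset_sum _ fun j _ => (hC i j).abs
  obtain ⟨M, hM⟩ := isCompact_Icc.exists_bound_of_continuousOn (s := Icc a b) hCc.continuousOn
  set K : ℝ := max M 1 with hKdef
  have hK1 : (1:ℝ) ≤ K := le_max_right _ _
  have hK0 : (0:ℝ) < K := lt_of_lt_of_le one_pos hK1
  have hKb : ∀ t ∈ Icc a b, ssum (C t) ≤ K := fun t ht =>
    le_trans (le_trans (le_abs_self _) (hM t ht)) (le_max_left _ _)
  set G : ℝ := ‖x₀‖ * Real.exp (K * (b - a)) with hGdef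
  have hG0 : 0 ≤ G := by positivity
  have apriori : ∀ c ∈ Icc a b, ∀ x : ℝ → Fin n → ℝ, x a = x₀ →
      (∀ t ∈ Icc a c, HasDerivWithinAt x (C t *ᵥ x t) (Icc a c) t) →
      ∀ t ∈ Icc a c, ‖x t‖ ≤ G := by
    intro c hc x hxa hx t ht
    have hcont : ContinuousOn x (Icc a c) := fun s hs => (hx s hs).continuousWithinAt
    have hder : ∀ s ∈ Ico a c, HasDerivWithinAt x (C s *ᵥ x s) (Ici s) s := by
      intro s hs
      refine (hx s ⟨hs.1, hs.2.le⟩).mono_of_mem_nhdsWithin ?_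
      rw [mem_nhdsWithin]
      exact ⟨Iio c, isOpen_Iio, hs.2, fun z hz => ⟨le_trans hs.1 hz.2, hz.1.le⟩⟩
    have hbd : ∀ s ∈ Ico a c, ‖C s *ᵥ x s‖ ≤ K * ‖x s‖ + 0 := by
      intro s hs
      rw [add_zero]
      exact le_trans (mulVec_norm_le _ _)
        (mul_le_mul_of_nonneg_right (hKb s ⟨hs.1, hs.2.le.trans hc.2⟩) (norm_nonneg _))
    have hstart : ‖x a‖ ≤ ‖x₀‖ := le_of_eq (by rw [hxa])
    have := norm_le_gronwallBound_of_norm_deriv_right_le hcont hder hstart hbd t ht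
    rw [gronwallBound_ε0] at this
    refine this.trans ?_
    rw [hGdef]
    apply mul_le_mul_of_nonneg_left _ (norm_nonneg _)
    apply Real.exp_le_exp.mpr
    exact mul_le_mul_of_nonneg_left (by linarith [ht.2, hc.2, ht.1]) hK0.le
  set Cb : ℝ := K * (G + 1) with hCbdef
  have hCb0 : 0 < Cb := by positivity
  set ε : ℝ := 1 / Cb with hεdef
  have hε0 : 0 < ε := by positivity
  have step : ∀ c ∈ Ico a b, ∀ y₀ : Fin n → ℝ, ‖y₀‖ ≤ G →
      ∃ y : ℝ → Fin n → ℝ, y c = y₀ ∧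
        ∀ t ∈ Icc c (min b (c + ε)), HasDerivWithinAt y (C t *ᵥ y t) (Icc c (min b (c + ε))) t := by
    intro c hc y₀ hy₀
    have hmem : c ∈ Icc c (min b (c + ε)) := ⟨le_refl c, le_min hc.2.le (by linarith)⟩
    have hpl : IsPicardLindelof (fun t x => C t *ᵥ x) (⟨c, hmem⟩ : Icc c (min b (c + ε))) y₀
        1 0 (Real.toNNReal Cb) (Real.toNNReal K) := by
      constructor
      · intro t ht
        exact (mulVec_lip (C t)
          (hKb t ⟨le_trans hc.1 ht.1, le_trans ht.2 (min_le_left _ _)⟩)).lipschitzOnWith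
      · intro x _
        exact (cont_mulVec hC x).continuousOn
      · intro t ht x hx
        rw [Real.coe_toNNReal _ hCb0.le]
        have hxn : ‖x‖ ≤ G + 1 := by
          have h2 : ‖x - y₀‖ ≤ 1 := by simpa using mem_closedBall_iff_norm.mp hx
          calc ‖x‖ ≤ ‖y₀‖ + ‖x - y₀‖ := norm_le_insert' x y₀
            _ ≤ G + 1 := add_le_add hy₀ h2
        calc ‖C t *ᵥ x‖ ≤ ssum (C t) * ‖x‖ := mulVec_norm_le _ _
          _ ≤ K * (G + 1) := mul_le_mul (hKb t ⟨le_trans hc.1 ht.1, le_trans ht.2 (min_le_left _ _)⟩)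
              hxn (norm_nonneg _) hK0.le
      · rw [Real.coe_toNNReal _ hCb0.le]
        simp only [NNReal.coe_one, NNReal.coe_zero, sub_zero]
        have h1 : max (min b (c + ε) - c) (c - c) ≤ ε :=
          max_le (by linarith [min_le_right b (c + ε)]) (by linarith)
        calc Cb * max (min b (c + ε) - c) (c - c) ≤ Cb * ε :=
              mul_le_mul_of_nonneg_left h1 hCb0.le
          _ = 1 := by rw [hεdef, mul_one_div_cancel hCb0.ne']
    obtain ⟨y, hy1, hy2⟩ := hpl.exists_eq_forall_mem_Icc_hasDerivWithinAt₀
    exact ⟨y, hy1, hy2⟩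
  have key : ∀ k : ℕ, ∃ x : ℝ → Fin n → ℝ, x a = x₀ ∧
      ∀ t ∈ Icc a (min b (a + k * ε)),
        HasDerivWithinAt x (C t *ᵥ x t) (Icc a (min b (a + k * ε))) t := by
    intro k
    induction k with
    | zero =>
      refine ⟨fun _ => x₀, rfl, ?_⟩
      intro t ht
      have hmin : min b (a + (0:ℕ) * ε) = a := by simp [min_eq_right hab]
      rw [hmin] at ht ⊢
      rw [Icc_self] at ht ⊢
      rw [mem_singleton_iff] at ht
      subst ht
      exact hasDerivWithinAt_singleton' _ _ _
    | succ k ih =>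
      obtain ⟨x, hxa, hx⟩ := ih
      by_cases hcb : b ≤ a + k * ε
      · have h1 : min b (a + k * ε) = b := min_eq_left hcb
        have h2 : min b (a + (k+1 : ℕ) * ε) = b := by
          apply min_eq_left
          push_cast
          nlinarith
        rw [h2]; rw [h1] at hx
        exact ⟨x, hxa, hx⟩
      · push_neg at hcb
        set c : ℝ := a + k * ε with hcdef
        have hca : a ≤ c := by
          have : (0:ℝ) ≤ k * ε := by positivity
          linarith
        have hc : c ∈ Ico a b := ⟨hca, hcb⟩
        have h1 : min b (a + k * ε) = c := min_eq_right hcb.le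
        rw [h1] at hx
        set c' : ℝ := min b (c + ε) with hc'def
        have hcc' : c ≤ c' := le_min hcb.le (by linarith)
        have h2 : min b (a + (k+1:ℕ) * ε) = c' := by
          rw [hc'def, hcdef]; congr 1; push_cast; ring
        rw [h2]
        have hxcG : ‖x c‖ ≤ G :=
          apriori c ⟨hca, hcb.le⟩ x hxa hx c ⟨hca, le_refl c⟩
        obtain ⟨y, hyc, hy⟩ := step c hc (x c) hxcG
        refine ⟨fun t => if t ≤ c then x t else y t,
          by show (if a ≤ c then x a else y a) = x₀; rw [if_pos hca]; exact hxa, ?_⟩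
        intro t ht
        have hsub : Icc a c' = Icc a c ∪ Icc c c' := (Icc_union_Icc_eq_Icc hca hcc').symm
        rcases lt_trichotomy t c with htc | htc | htc
        · have hx' := (hx t ⟨ht.1, htc.le⟩).mono_of_mem_nhdsWithin (s := Icc a c')
            (by rw [mem_nhdsWithin]
                exact ⟨Iio c, isOpen_Iio, htc, fun z hz => ⟨hz.2.1, hz.1.le⟩⟩)
          have heq : (fun s => if s ≤ c then x s else y s) =ᶠ[nhdsWithin t (Icc a c')] x := by
            apply Filter.eventuallyEq_of_mem (mem_nhdsWithin_of_mem_nhds (Iic_mem_nhds htc))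
            intro s hs
            exact if_pos hs
          have hzt : (if t ≤ c then x t else y t) = x t := if_pos htc.le
          rw [show C t *ᵥ (if t ≤ c then x t else y t) = C t *ᵥ x t by rw [hzt]]
          exact hx'.congr_of_eventuallyEq heq hzt
        · have hd1 : HasDerivWithinAt (fun s => if s ≤ c then x s else y s)
              (C c *ᵥ x c) (Icc a c) c :=
            (hx c ⟨hca.trans (le_refl _) , le_refl c⟩ |>.mono (le_refl _ : Icc a c ⊆ Icc a c)).congr
              (fun s hs => if_pos hs.2) (if_pos (le_refl c))
          have hd2 : HasDerivWithinAt (fun s => if s ≤ c then x s else y s)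
              (C c *ᵥ x c) (Icc c c') c := by
            have h3 := hy c ⟨le_refl c, hcc'⟩
            rw [hyc] at h3
            refine h3.congr ?_ (by rw [if_pos (le_refl c)]; exact hyc.symm)
            intro s hs
            by_cases hst : s ≤ c
            · have hsc : s = c := le_antisymm hst hs.1
              rw [if_pos hst, hsc]
              exact hyc.symm
            · exact if_neg hst
          have hu := hd1.union hd2
          rw [← hsub] at hu
          rw [htc]
          rw [show C c *ᵥ (if c ≤ c then x c else y c) = C c *ᵥ x c by rw [if_pos (le_refl c)]]
          exact hu
        · have hy' := (hy t ⟨htc.le, ht.2⟩).mono_of_mem_nhdsWithin (s := Icc a c')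
            (by rw [mem_nhdsWithin]
                exact ⟨Ioi c, isOpen_Ioi, htc, fun s hs => ⟨hs.1.le, hs.2.2⟩⟩)
          have heq : (fun s => if s ≤ c then x s else y s) =ᶠ[nhdsWithin t (Icc a c')] y := by
            apply Filter.eventuallyEq_of_mem (mem_nhdsWithin_of_mem_nhds (Ioi_mem_nhds htc))
            intro s hs
            exact if_neg (not_le.mpr hs)
          have hzt : (if t ≤ c then x t else y t) = y t := if_neg (not_le.mpr htc)
          rw [show C t *ᵥ (if t ≤ c then x t else y t) = C t *ᵥ y t by rw [hzt]]
          exact hy'.congr_of_eventuallyEq heq hzt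
  obtain ⟨k, hk⟩ := exists_nat_ge ((b - a) / ε)
  have hbk : b ≤ a + k * ε := by
    rw [div_le_iff₀ hε0] at hk
    linarith
  obtain ⟨x, hxa, hx⟩ := key k
  rw [min_eq_left hbk] at hx
  exact ⟨x, hxa, hx⟩


lemma exists_msol (C : ℝ → Matrix (Fin n) (Fin n) ℝ)
    (hC : ∀ i j, Continuous fun t => C t i j) (a b : ℝ) (hab : a ≤ b) :
    ∃ X : ℝ → Matrix (Fin n) (Fin n) ℝ, X a = 1 ∧
      ∀ i j, ∀ t ∈ Icc a b,
        HasDerivWithinAt (fun s => X s i j) ((C t * X t) i j) (Icc a b) t := by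
  have h := fun j : Fin n => exists_sol C hC a b hab (Pi.single j 1)
  choose xc h1 h2 using h
  refine ⟨fun t => Matrix.of fun i j => xc j t i, ?_, ?_⟩
  · ext i j
    show xc j a i = (1 : Matrix (Fin n) (Fin n) ℝ) i j
    rw [h1 j, Matrix.one_apply, Pi.single_apply]
  · intro i j t ht
    have hv := h2 j t ht
    exact (hasDerivWithinAt_pi.mp hv) i

lemma fundamental (A : ℝ → Matrix (Fin n) (Fin n) ℝ)
    (hA : ∀ i j, Continuous fun t => A t i j) (a b : ℝ) (hab : a ≤ b) :
    ∃ X Z : ℝ → Matrix (Fin n) (Fin n) ℝ,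
      (∀ i j, ∀ t ∈ Icc a b,
        HasDerivWithinAt (fun s => X s i j) ((A t * X t) i j) (Icc a b) t) ∧
      (∀ i j, ∀ t ∈ Icc a b,
        HasDerivWithinAt (fun s => Z s i j) (((-(A t)ᵀ) * Z t) i j) (Icc a b) t) ∧
      Z a = 1 ∧
      (∀ t ∈ Icc a b, (Z t)ᵀ * X t = 1) := by
  obtain ⟨X, hXa, hX⟩ := exists_msol A hA a b hab
  obtain ⟨Z, hZa, hZ⟩ := exists_msol (fun t => -(A t)ᵀ)
    (fun i j => ((hA j i).neg)) a b hab
  refine ⟨X, Z, hX, hZ, hZa, ?_⟩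
  have key : ∀ i j, ∀ t ∈ Icc a b, (∑ k, Z t k i * X t k j) = ∑ k, Z a k i * X a k j := by
    intro i j
    apply constant_of_has_deriv_right_zero
    · exact continuousOn_finset_sum _ fun k _ => fun t ht =>
        ((hZ k i t ht).continuousWithinAt).mul ((hX k j t ht).continuousWithinAt)
    · intro t ht
      have ht' : t ∈ Icc a b := ⟨ht.1, ht.2.le⟩
      have hd : HasDerivWithinAt (fun s => ∑ k, Z s k i * X s k j)
          (∑ k, (((-(A t)ᵀ) * Z t) k i * X t k j + Z t k i * ((A t * X t) k j)))
          (Icc a b) t := by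
        apply HasDerivWithinAt.fun_sum
        intro k _
        exact (hZ k i t ht').mul (hX k j t ht')
      have hzero : (∑ k, (((-(A t)ᵀ) * Z t) k i * X t k j + Z t k i * ((A t * X t) k j))) = 0 := by
        rw [Finset.sum_add_distrib]
        have e1 : ∑ k, ((-(A t)ᵀ) * Z t) k i * X t k j
            = -∑ k, ∑ l, A t l k * Z t l i * X t k j := by
          rw [← Finset.sum_neg_distrib]
          apply Finset.sum_congr rfl
          intro k _
          rw [Matrix.mul_apply]
          simp only [Matrix.neg_apply, Matrix.transpose_apply, Finset.sum_mul,
            ← Finset.sum_neg_distrib]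
          apply Finset.sum_congr rfl
          intro l _
          ring
        have e2 : ∑ k, Z t k i * (A t * X t) k j
            = ∑ k, ∑ l, A t k l * Z t k i * X t l j := by
          apply Finset.sum_congr rfl
          intro k _
          rw [Matrix.mul_apply, Finset.mul_sum]
          apply Finset.sum_congr rfl
          intro l _
          ring
        rw [e1, e2, Finset.sum_comm (f := fun k l => A t l k * Z t l i * X t k j)]
        exact neg_add_cancel _
      rw [← hzero]
      refine hd.mono_of_mem_nhdsWithin ?_
      rw [mem_nhdsWithin]
      exact ⟨Iio b, isOpen_Iio, ht.2, fun z hz => ⟨le_trans ht.1 hz.2, hz.1.le⟩⟩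
  intro t ht
  ext i j
  rw [Matrix.mul_apply]
  have h1 : ∀ k, (Z t)ᵀ i k * X t k j = Z t k i * X t k j := by
    intro k; rw [Matrix.transpose_apply]
  calc ∑ k, (Z t)ᵀ i k * X t k j = ∑ k, Z t k i * X t k j := Finset.sum_congr rfl fun k _ => h1 k
    _ = ∑ k, Z a k i * X a k j := key i j t ht
    _ = (1 : Matrix (Fin n) (Fin n) ℝ) i j := by
        rw [hZa, hXa]
        simp [Matrix.one_apply, Finset.sum_ite_eq, eq_comm]

lemma deriv_eq_zero_of_eqOn_zero {q : ℝ → ℝ} {d a b t : ℝ} (hab : a < b) (ht : t ∈ Icc a b)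
    (hq : ∀ s ∈ Icc a b, q s = 0) (hd : HasDerivAt q d t) : d = 0 := by
  have U := uniqueDiffOn_Icc hab t ht
  have h1 := hd.hasDerivWithinAt.derivWithin U
  have h2 := ((hasDerivWithinAt_const t (Icc a b) (0:ℝ)).congr hq (hq t ht)).derivWithin U
  rw [← h1, h2]

lemma alg1 {n m : ℕ} (N : Matrix (Fin n) (Fin m) ℝ) (w : Fin n → ℝ) :
    ∑ i, w i * (∑ k, (∑ j, N i j * N k j) * w k) = ∑ j, (∑ k, N k j * w k)^2 := by
  calc ∑ i, w i * (∑ k, (∑ j, N i j * N k j) * w k)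
      = ∑ i, ∑ k, ∑ j, (N i j * w i) * (N k j * w k) := by
        apply Finset.sum_congr rfl; intro i _
        rw [Finset.mul_sum]; apply Finset.sum_congr rfl; intro k _
        rw [Finset.sum_mul, Finset.mul_sum]; apply Finset.sum_congr rfl; intro j _; ring
    _ = ∑ i, ∑ j, ∑ k, (N i j * w i) * (N k j * w k) := by
        apply Finset.sum_congr rfl; intro i _
        exact Finset.sum_comm
    _ = ∑ j, ∑ i, ∑ k, (N i j * w i) * (N k j * w k) := Finset.sum_comm
    _ = ∑ j, (∑ k, N k j * w k)^2 := by
        apply Finset.sum_congr rfl; intro j _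
        rw [sq, Finset.sum_mul_sum]

lemma zero_of_integral_zero {g : ℝ → ℝ} (hg : Continuous g) (h0 : ∀ s, 0 ≤ g s)
    {a b : ℝ} (hab : a < b) (hint : (∫ s in a..b, g s) = 0) :
    ∀ s ∈ Icc a b, g s = 0 := by
  by_contra hcon
  push_neg at hcon
  obtain ⟨s₀, hs₀, hne⟩ := hcon
  have hpos : 0 < g s₀ := lt_of_le_of_ne (h0 s₀) (Ne.symm hne)
  obtain ⟨δ, hδ, hδ2⟩ := Metric.continuousAt_iff.mp hg.continuousAt (g s₀ / 2) (by linarith)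
  set α := max a (s₀ - δ/2) with hα
  set β := min b (s₀ + δ/2) with hβ
  have haα : a ≤ α := le_max_left _ _
  have hβb : β ≤ b := min_le_left _ _
  have hαs : α ≤ s₀ := max_le hs₀.1 (by linarith)
  have hsβ : s₀ ≤ β := le_min hs₀.2 (by linarith)
  have hαβ : α < β := by
    rcases lt_or_eq_of_le hs₀.1 with h | h
    · exact lt_of_lt_of_le (max_lt h (by linarith)) hsβ
    · exact lt_of_le_of_lt hαs (lt_min (h ▸ hab) (by linarith))
  have hmid : 0 < ∫ s in α..β, g s := by
    apply intervalIntegral.intervalIntegral_pos_of_pos_on (hg.intervalIntegrable _ _) _ hαβ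
    intro x hx
    have hd : dist x s₀ < δ := by
      rw [Real.dist_eq, abs_lt]
      constructor
      · have h2 : s₀ - δ/2 ≤ α := le_max_right _ _
        linarith [hx.1]
      · have h2 : β ≤ s₀ + δ/2 := min_le_right _ _
        linarith [hx.2]
    have := hδ2 hd
    rw [Real.dist_eq, abs_lt] at this
    linarith [this.1]
  have h1 : (0:ℝ) ≤ ∫ s in a..α, g s := intervalIntegral.integral_nonneg haα (fun u _ => h0 u)
  have h2 : (0:ℝ) ≤ ∫ s in β..b, g s := intervalIntegral.integral_nonneg hβb (fun u _ => h0 u)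
  have e1 : (∫ s in a..α, g s) + (∫ s in α..β, g s) = ∫ s in a..β, g s :=
    intervalIntegral.integral_add_adjacent_intervals (hg.intervalIntegrable _ _)
      (hg.intervalIntegrable _ _)
  have e2 : (∫ s in a..β, g s) + (∫ s in β..b, g s) = ∫ s in a..b, g s :=
    intervalIntegral.integral_add_adjacent_intervals (hg.intervalIntegrable _ _)
      (hg.intervalIntegrable _ _)
  linarith

lemma Bseq_smooth {n m : ℕ} (A : ℝ → Matrix (Fin n) (Fin n) ℝ)
    (B : ℝ → Matrix (Fin n) (Fin m) ℝ)
    (hA : ∀ i j, ContDiff ℝ (⊤ : ℕ∞) fun t => A t i j) (hB : ∀ i j, ContDiff ℝ (⊤ : ℕ∞) fun t => B t i j)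
    (Bseq : ℕ → ℝ → Matrix (Fin n) (Fin m) ℝ) (hB0 : Bseq 0 = B)
    (hBrec : ∀ i t, Bseq (i + 1) t
      = Matrix.of (fun k j => deriv (fun s => Bseq i s k j) t) - A t * Bseq i t) :
    ∀ i k j, ContDiff ℝ ((⊤:ℕ∞) : WithTop ℕ∞) fun t => Bseq i t k j := by
  intro i
  induction i with
  | zero => intro k j; rw [hB0]; exact (hB k j).of_le (by simp)
  | succ i ih =>
    intro k j
    have he : (fun t => Bseq (i+1) t k j)
        = fun t => deriv (fun s => Bseq i s k j) t - ∑ l, A t k l * Bseq i t l j := by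
      funext t
      rw [hBrec i t]
      simp [Matrix.sub_apply, Matrix.mul_apply]
    rw [he]
    apply ContDiff.sub
    · exact (contDiff_infty_iff_deriv.mp (ih k j)).2
    · exact ContDiff.sum fun l _ => ((hA k l).of_le (by simp)).mul (ih l j)

end Chang

/-- Chang's criterion: for x' = A(t)x + B(t)u with smooth A, B and
B₀ = B, B_i = B_{i−1}' − A B_{i−1}, if the columns-images of the B_i at some
t₀ ∈ [0,t_f] span ℝⁿ, then the system is controllable on [0,t_f]. -/
theorem stmt6 {n m : ℕ} (tf : ℝ) (htf : 0 < tf)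
    (A : ℝ → Matrix (Fin n) (Fin n) ℝ) (B : ℝ → Matrix (Fin n) (Fin m) ℝ)
    (hA : ∀ i j, ContDiff ℝ (⊤ : ℕ∞) (fun t => A t i j))
    (hB : ∀ i j, ContDiff ℝ (⊤ : ℕ∞) (fun t => B t i j))
    (Bseq : ℕ → ℝ → Matrix (Fin n) (Fin m) ℝ)
    (hB0 : Bseq 0 = B)
    (hBrec : ∀ i t, Bseq (i + 1) t
      = Matrix.of (fun k j => deriv (fun s => Bseq i s k j) t) - A t * Bseq i t)
    (hspan : ∃ t₀ ∈ Icc (0 : ℝ) tf,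
      Submodule.span ℝ {v : Fin n → ℝ | ∃ (i : ℕ) (u : Fin m → ℝ),
        v = Bseq i t₀ *ᵥ u} = ⊤) :
    ∀ x₀ xf : Fin n → ℝ, ∃ (u : ℝ → Fin m → ℝ) (x : ℝ → Fin n → ℝ),
      Measurable u ∧ (∃ M : ℝ, ∀ t ∈ Icc (0 : ℝ) tf, ‖u t‖ ≤ M) ∧
      x 0 = x₀ ∧ x tf = xf ∧
      ∀ t ∈ Icc (0 : ℝ) tf, HasDerivAt x (A t *ᵥ x t + B t *ᵥ u t) t := by
  intro x₀ xf
  obtain ⟨t₀, ht₀, hsp⟩ := hspan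
  have hAc : ∀ i j, Continuous fun t => A t i j := fun i j => (hA i j).continuous
  have hBc : ∀ i j, Continuous fun t => B t i j := fun i j => (hB i j).continuous
  have hBsm := Chang.Bseq_smooth A B hA hB Bseq hB0 hBrec
  obtain ⟨a, ha⟩ : ∃ a : ℝ, a = -1 := ⟨-1, rfl⟩
  obtain ⟨b, hb⟩ : ∃ b : ℝ, b = tf + 1 := ⟨tf + 1, rfl⟩
  have ha0 : a < 0 := by rw [ha]; norm_num
  have htfb : tf < b := by rw [hb]; linarith
  have hab : a ≤ b := by rw [ha, hb]; linarith
  have hsub : Icc (0:ℝ) tf ⊆ Icc a b := Icc_subset_Icc ha0.le htfb.le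
  have hIoo : ∀ t ∈ Icc (0:ℝ) tf, t ∈ Ioo a b :=
    fun t ht => ⟨lt_of_lt_of_le ha0 ht.1, lt_of_le_of_lt ht.2 htfb⟩
  obtain ⟨X, Z, hX, hZ, hZa, hinv⟩ := Chang.fundamental A hAc a b hab
  have hXY : ∀ t ∈ Icc a b, X t * (Z t)ᵀ = 1 := fun t ht => mul_eq_one_comm.mp (hinv t ht)
  have hXd : ∀ i j, ∀ t ∈ Ioo a b, HasDerivAt (fun s => X s i j) ((A t * X t) i j) t :=
    fun i j t ht => (hX i j t ⟨ht.1.le, ht.2.le⟩).hasDerivAt (Icc_mem_nhds ht.1 ht.2)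
  have hZd : ∀ i j, ∀ t ∈ Ioo a b, HasDerivAt (fun s => Z s i j) (((-(A t)ᵀ) * Z t) i j) t :=
    fun i j t ht => (hZ i j t ⟨ht.1.le, ht.2.le⟩).hasDerivAt (Icc_mem_nhds ht.1 ht.2)
  have hXc : ∀ i j, ContinuousOn (fun s => X s i j) (Icc a b) :=
    fun i j t ht => (hX i j t ht).continuousWithinAt
  have hZc : ∀ i j, ContinuousOn (fun s => Z s i j) (Icc a b) :=
    fun i j t ht => (hZ i j t ht).continuousWithinAt
  -- clamp to [0, tf]
  set cl : ℝ → ℝ := fun s => max 0 (min tf s) with hcl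
  have hclc : Continuous cl := continuous_const.max (continuous_const.min continuous_id)
  have hclmem : ∀ s, cl s ∈ Icc (0:ℝ) tf :=
    fun s => ⟨le_max_left _ _, max_le htf.le (min_le_left _ _)⟩
  have hcleq : ∀ s ∈ Icc (0:ℝ) tf, cl s = s := by
    intro s hs
    show max 0 (min tf s) = s
    rw [min_eq_right hs.2, max_eq_right hs.1]
  set Y : ℝ → Matrix (Fin n) (Fin n) ℝ := fun t => (Z t)ᵀ with hYdef
  set N : ℝ → Matrix (Fin n) (Fin m) ℝ := fun s => Y (cl s) * B (cl s) with hNdef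
  have hNapp : ∀ s i j, N s i j = ∑ l, Z (cl s) l i * B (cl s) l j := by
    intro s i j
    show (Y (cl s) * B (cl s)) i j = _
    rw [Matrix.mul_apply]
    apply Finset.sum_congr rfl
    intro l _
    rfl
  have hNc : ∀ i j, Continuous fun s => N s i j := by
    intro i j
    have he : (fun s => N s i j) = fun s => ∑ l, Z (cl s) l i * B (cl s) l j :=
      funext fun s => hNapp s i j
    rw [he]
    refine continuous_finset_sum _ fun l _ => Continuous.mul ?_ ?_
    · exact (hZc l i).comp_continuous hclc (fun s => hsub (hclmem s))
    · exact (hBc l j).comp hclc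
  set Gm : Matrix (Fin n) (Fin n) ℝ :=
    Matrix.of (fun i k => ∫ s in (0:ℝ)..tf, ∑ j, N s i j * N s k j) with hGmdef
  have hGmapp : ∀ i k, Gm i k = ∫ s in (0:ℝ)..tf, ∑ j, N s i j * N s k j := fun i k => rfl
  have hGmmul : ∀ (p : Fin n → ℝ) (i : Fin n),
      (Gm *ᵥ p) i = ∫ s in (0:ℝ)..tf, ∑ k, (∑ j, N s i j * N s k j) * p k := by
    intro p i
    have h1 : (Gm *ᵥ p) i = ∑ k, Gm i k * p k := by
      simp [Matrix.mulVec, dotProduct]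
    rw [h1]
    calc ∑ k, Gm i k * p k
        = ∑ k, ∫ s in (0:ℝ)..tf, (∑ j, N s i j * N s k j) * p k := by
          apply Finset.sum_congr rfl; intro k _
          rw [hGmapp, intervalIntegral.integral_mul_const]
      _ = ∫ s in (0:ℝ)..tf, ∑ k, (∑ j, N s i j * N s k j) * p k := by
          rw [intervalIntegral.integral_finset_sum]
          intro k _
          exact (Continuous.mul
            (continuous_finset_sum _ fun j _ => (hNc i j).mul (hNc k j))
            continuous_const).intervalIntegrable _ _
  -- kernel of the Gramian is trivial
  have hker : ∀ w : Fin n → ℝ, Gm *ᵥ w = 0 → w = 0 := by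
    intro w hw
    set ψ : ℝ → Fin n → ℝ := fun s => Z s *ᵥ w with hψdef
    have hψapp : ∀ s i, ψ s i = ∑ k, Z s i k * w k := by
      intro s i; simp [hψdef, Matrix.mulVec, dotProduct]
    -- step 1 : N^T w vanishes on [0, tf]
    have hg0 : ∀ s ∈ Icc (0:ℝ) tf, ∀ j, ∑ k, N s k j * w k = 0 := by
      have hgc : Continuous fun s => ∑ j, (∑ k, N s k j * w k)^2 := by
        apply continuous_finset_sum; intro j _
        exact (continuous_finset_sum _ fun k _ => (hNc k j).mul continuous_const).pow 2
      have hzero : (∫ s in (0:ℝ)..tf, ∑ j, (∑ k, N s k j * w k)^2) = 0 := by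
        have h2 : ∑ i, w i * (Gm *ᵥ w) i = 0 := by rw [hw]; simp
        have h3 : ∑ i, w i * (Gm *ᵥ w) i
            = ∫ s in (0:ℝ)..tf, ∑ j, (∑ k, N s k j * w k)^2 := by
          calc ∑ i, w i * (Gm *ᵥ w) i
              = ∑ i, ∫ s in (0:ℝ)..tf,
                  w i * (∑ k, (∑ j, N s i j * N s k j) * w k) := by
                apply Finset.sum_congr rfl; intro i _
                rw [hGmmul w i, ← intervalIntegral.integral_const_mul]
            _ = ∫ s in (0:ℝ)..tf, ∑ i,
                  w i * (∑ k, (∑ j, N s i j * N s k j) * w k) := by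
                refine (intervalIntegral.integral_finset_sum ?_).symm
                intro i _
                apply Continuous.intervalIntegrable
                apply continuous_const.mul
                apply continuous_finset_sum; intro k _
                exact (continuous_finset_sum _ fun j _ => (hNc i j).mul (hNc k j)).mul
                  continuous_const
            _ = ∫ s in (0:ℝ)..tf, ∑ j, (∑ k, N s k j * w k)^2 := by
                apply intervalIntegral.integral_congr
                intro s _
                exact Chang.alg1 (N s) w
        rw [← h3, h2]
      have hz := Chang.zero_of_integral_zero hgc
        (fun s => Finset.sum_nonneg fun j _ => sq_nonneg _) htf hzero
      intro s hs j
      have := (Finset.sum_eq_zero_iff_of_nonneg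
        (fun j _ => sq_nonneg ((fun j => ∑ k, N s k j * w k) j))).mp (hz s hs) j
        (Finset.mem_univ j)
      exact (pow_eq_zero_iff two_ne_zero).mp this
    -- base case : B^T ψ = 0 on [0, tf]
    have base : ∀ s ∈ Icc (0:ℝ) tf, ∀ j, ∑ k, B s k j * ψ s k = 0 := by
      intro s hs j
      have h1 := hg0 s hs j
      have h2 : ∑ k, N s k j * w k = ∑ l, B s l j * ψ s l := by
        calc ∑ k, N s k j * w k
            = ∑ k, ∑ l, (Z s l k * B s l j) * w k := by
              apply Finset.sum_congr rfl; intro k _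
              rw [hNapp, hcleq s hs, Finset.sum_mul]
          _ = ∑ l, ∑ k, (Z s l k * B s l j) * w k := Finset.sum_comm
          _ = ∑ l, B s l j * ψ s l := by
              apply Finset.sum_congr rfl; intro l _
              rw [hψapp, Finset.mul_sum]
              apply Finset.sum_congr rfl; intro k _; ring
      rw [← h2]; exact h1
    -- derivative of ψ
    have hψd : ∀ t ∈ Ioo a b, HasDerivAt ψ ((-(A t)ᵀ) *ᵥ ψ t) t := by
      intro t ht
      rw [hasDerivAt_pi]
      intro i
      have h1 : HasDerivAt (fun s => ∑ k, Z s i k * w k)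
          (∑ k, ((-(A t)ᵀ) * Z t) i k * w k) t :=
        HasDerivAt.fun_sum fun k _ => (hZd i k t ht).mul_const (w k)
      have hfun : (fun s => ψ s i) = fun s => ∑ k, Z s i k * w k :=
        funext fun s => hψapp s i
      have hval : ((-(A t)ᵀ) *ᵥ ψ t) i = ∑ k, ((-(A t)ᵀ) * Z t) i k * w k := by
        rw [hψdef]
        show ((-(A t)ᵀ) *ᵥ (Z t *ᵥ w)) i = _
        rw [Matrix.mulVec_mulVec]
        simp [Matrix.mulVec, dotProduct]
      rw [hfun, hval]
      exact h1
    -- induction on Bseq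
    have hind : ∀ i, ∀ s ∈ Icc (0:ℝ) tf, ∀ j, ∑ k, Bseq i s k j * ψ s k = 0 := by
      intro i
      induction i with
      | zero =>
        intro s hs j
        simp only [hB0]
        exact base s hs j
      | succ i ih =>
        intro s hs j
        have hq0 : ∀ r ∈ Icc (0:ℝ) tf, (∑ k, Bseq i r k j * ψ r k) = 0 :=
          fun r hr => ih r hr j
        have hqd : HasDerivAt (fun r => ∑ k, Bseq i r k j * ψ r k)
            (∑ k, (deriv (fun r => Bseq i r k j) s * ψ s k
              + Bseq i s k j * (((-(A s)ᵀ) *ᵥ ψ s) k))) s := by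
          apply HasDerivAt.fun_sum
          intro k _
          have hbd : HasDerivAt (fun r => Bseq i r k j)
              (deriv (fun r => Bseq i r k j) s) s :=
            ((hBsm i k j).differentiable (by simp)).differentiableAt.hasDerivAt
          have hpd : HasDerivAt (fun r => ψ r k) (((-(A s)ᵀ) *ᵥ ψ s) k) s :=
            hasDerivAt_pi.mp (hψd s (hIoo s hs)) k
          exact hbd.mul hpd
        have hd0 := Chang.deriv_eq_zero_of_eqOn_zero htf hs hq0 hqd
        have e1 : ∀ k : Fin n, Bseq (i+1) s k j
            = deriv (fun r => Bseq i r k j) s - ∑ l, A s k l * Bseq i s l j := by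
          intro k; rw [hBrec i s]; simp [Matrix.sub_apply, Matrix.mul_apply]
        have e2 : ∀ k : Fin n, ((-(A s)ᵀ) *ᵥ ψ s) k = -∑ l, A s l k * ψ s l := by
          intro k
          simp [Matrix.mulVec, dotProduct, Matrix.transpose_apply,
            Matrix.neg_apply, neg_mul, Finset.sum_neg_distrib]
        have hdouble : ∑ k, ∑ l, (A s k l * Bseq i s l j) * ψ s k
            = ∑ k, ∑ l, Bseq i s k j * (A s l k * ψ s l) := by
          rw [Finset.sum_comm]
          apply Finset.sum_congr rfl; intro k _
          apply Finset.sum_congr rfl; intro l _; ring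
        have key : ∑ k, Bseq (i+1) s k j * ψ s k
            = ∑ k, (deriv (fun r => Bseq i r k j) s * ψ s k
              + Bseq i s k j * (((-(A s)ᵀ) *ᵥ ψ s) k)) := by
          calc ∑ k, Bseq (i+1) s k j * ψ s k
              = ∑ k, (deriv (fun r => Bseq i r k j) s * ψ s k
                  - ∑ l, (A s k l * Bseq i s l j) * ψ s k) := by
                apply Finset.sum_congr rfl; intro k _
                rw [e1 k, sub_mul, Finset.sum_mul]
            _ = (∑ k, deriv (fun r => Bseq i r k j) s * ψ s k)
                  - ∑ k, ∑ l, (A s k l * Bseq i s l j) * ψ s k := by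
                rw [Finset.sum_sub_distrib]
            _ = (∑ k, deriv (fun r => Bseq i r k j) s * ψ s k)
                  - ∑ k, ∑ l, Bseq i s k j * (A s l k * ψ s l) := by rw [hdouble]
            _ = ∑ k, (deriv (fun r => Bseq i r k j) s * ψ s k
                  + Bseq i s k j * (((-(A s)ᵀ) *ᵥ ψ s) k)) := by
                rw [Finset.sum_add_distrib, sub_eq_add_neg]
                congr 1
                rw [← Finset.sum_neg_distrib]
                apply Finset.sum_congr rfl; intro k _
                rw [e2 k, mul_neg, Finset.mul_sum]
        rw [key, hd0]
    -- ψ t₀ = 0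
    have hψt₀ : ψ t₀ = 0 := by
      have hl : ∀ (i : ℕ) (v : Fin m → ℝ), ∑ k, (Bseq i t₀ *ᵥ v) k * ψ t₀ k = 0 := by
        intro i v
        calc ∑ k, (Bseq i t₀ *ᵥ v) k * ψ t₀ k
            = ∑ k, ∑ j, (Bseq i t₀ k j * v j) * ψ t₀ k := by
              apply Finset.sum_congr rfl; intro k _
              show (∑ j, Bseq i t₀ k j * v j) * ψ t₀ k = _
              rw [Finset.sum_mul]
          _ = ∑ j, ∑ k, (Bseq i t₀ k j * v j) * ψ t₀ k := Finset.sum_comm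
          _ = ∑ j, v j * (∑ k, Bseq i t₀ k j * ψ t₀ k) := by
              apply Finset.sum_congr rfl; intro j _
              rw [Finset.mul_sum]
              apply Finset.sum_congr rfl; intro k _; ring
          _ = 0 := by
              apply Finset.sum_eq_zero; intro j _
              rw [hind i t₀ ht₀ j, mul_zero]
      set ℓ : (Fin n → ℝ) →ₗ[ℝ] ℝ :=
        { toFun := fun y => ∑ k, y k * ψ t₀ k
          map_add' := by intro y z; simp [add_mul, Finset.sum_add_distrib]
          map_smul' := by
            intro c y
            simp [Finset.mul_sum, smul_eq_mul, mul_assoc] } with hℓ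
      have htop : Submodule.span ℝ {v : Fin n → ℝ | ∃ (i : ℕ) (u : Fin m → ℝ),
          v = Bseq i t₀ *ᵥ u} ≤ LinearMap.ker ℓ := by
        apply Submodule.span_le.mpr
        rintro v ⟨i, uu, rfl⟩
        exact LinearMap.mem_ker.mpr (hl i uu)
      rw [hsp] at htop
      have hφ : ∑ k, ψ t₀ k * ψ t₀ k = 0 :=
        LinearMap.mem_ker.mp (htop (Submodule.mem_top (x := ψ t₀)))
      funext k
      have hk := (Finset.sum_eq_zero_iff_of_nonneg
        (fun k _ => mul_self_nonneg (ψ t₀ k))).mp hφ k (Finset.mem_univ k)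
      exact mul_self_eq_zero.mp hk
    -- uniqueness : ψ ≡ 0 on [a, b]
    set cl2 : ℝ → ℝ := fun s => max a (min b s) with hcl2
    have hcl2c : Continuous cl2 := continuous_const.max (continuous_const.min continuous_id)
    have hcl2mem : ∀ s, cl2 s ∈ Icc a b :=
      fun s => ⟨le_max_left _ _, max_le hab (min_le_left _ _)⟩
    have hcl2eq : ∀ s ∈ Ioo a b, cl2 s = s := by
      intro s hs
      show max a (min b s) = s
      rw [min_eq_right hs.2.le, max_eq_right hs.1.le]
    have hcont2 : Continuous fun t => Chang.ssum (-(A t)ᵀ) := by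
      apply continuous_finset_sum; intro i _
      apply continuous_finset_sum; intro j _
      exact ((hAc j i).neg).abs
    obtain ⟨K2, hK2⟩ := isCompact_Icc.exists_bound_of_continuousOn
      (s := Icc a b) hcont2.continuousOn
    have hbound : ∀ s : ℝ, Chang.ssum (-(A (cl2 s))ᵀ) ≤ K2 :=
      fun s => le_trans (le_abs_self _) (hK2 _ (hcl2mem s))
    set vv : ℝ → (Fin n → ℝ) → (Fin n → ℝ) := fun s y => (-(A (cl2 s))ᵀ) *ᵥ y with hvv
    have hlip : ∀ s : ℝ, LipschitzOnWith (Real.toNNReal K2) (vv s) univ :=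
      fun s => (Chang.mulVec_lip _ (hbound s)).lipschitzOnWith
    have ht₀Ioo : t₀ ∈ Ioo a b := hIoo t₀ ht₀
    have hψcont : ContinuousOn ψ (Icc a b) := by
      rw [continuousOn_pi]
      intro i
      have he : (fun s => ψ s i) = fun s => ∑ k, Z s i k * w k :=
        funext fun s => hψapp s i
      rw [he]
      exact continuousOn_finset_sum _ fun k _ => (hZc i k).mul continuousOn_const
    have hψdv : ∀ s ∈ Ioo a b, HasDerivAt ψ (vv s (ψ s)) s := by
      intro s hs
      show HasDerivAt ψ ((-(A (cl2 s))ᵀ) *ᵥ ψ s) s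
      rw [hcl2eq s hs]
      exact hψd s hs
    have huniq : EqOn ψ (fun _ => (0 : Fin n → ℝ)) (Icc a b) := by
      apply ODE_solution_unique_of_mem_Icc (v := vv) (s := fun _ => univ)
        (fun t _ => hlip t) ht₀Ioo hψcont hψdv (fun _ _ => mem_univ _)
        continuousOn_const ?_ (fun _ _ => mem_univ _) ?_
      · intro s _
        have h0 : vv s (0 : Fin n → ℝ) = 0 := Matrix.mulVec_zero _
        rw [h0]
        exact hasDerivAt_const s 0
      · rw [hψt₀]
    have hwa : ψ a = 0 := huniq (left_mem_Icc.mpr hab)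
    have : Z a *ᵥ w = 0 := hwa
    rwa [hZa, Matrix.one_mulVec] at this
  -- surjectivity of the Gramian
  have hsurj : Function.Surjective (Matrix.mulVecLin Gm) := by
    rw [← LinearMap.injective_iff_surjective]
    intro y z hyz
    have h1 : Gm *ᵥ (y - z) = 0 := by
      rw [Matrix.mulVec_sub]
      rw [Matrix.mulVecLin_apply, Matrix.mulVecLin_apply] at hyz
      rw [hyz, sub_self]
    have := hker _ h1
    exact sub_eq_zero.mp this
  obtain ⟨p, hp⟩ := hsurj ((Y tf *ᵥ xf) - (Y 0 *ᵥ x₀))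
  rw [Matrix.mulVecLin_apply] at hp
  set u : ℝ → Fin m → ℝ := fun s => (N s)ᵀ *ᵥ p with hu
  have huapp : ∀ s j, u s j = ∑ k, N s k j * p k := by
    intro s j
    simp [hu, Matrix.mulVec, dotProduct, Matrix.transpose_apply]
  have huc : Continuous u := by
    apply continuous_pi
    intro j
    have he : (fun s => u s j) = fun s => ∑ k, N s k j * p k :=
      funext fun s => huapp s j
    rw [he]
    exact continuous_finset_sum _ fun k _ => (hNc k j).mul continuous_const
  set F : Fin n → ℝ → ℝ := fun i s => ∑ j, N s i j * u s j with hF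
  have hFc : ∀ i, Continuous (F i) := by
    intro i
    apply continuous_finset_sum
    intro j _
    exact (hNc i j).mul ((continuous_apply j).comp huc)
  set g : ℝ → Fin n → ℝ := fun t i => (Y 0 *ᵥ x₀) i + ∫ s in (0:ℝ)..t, F i s with hg
  set x : ℝ → Fin n → ℝ := fun t => X t *ᵥ g t with hx
  have h0ab : (0:ℝ) ∈ Icc a b := ⟨ha0.le, by linarith⟩
  have htfab : tf ∈ Icc a b := ⟨by linarith, htfb.le⟩
  refine ⟨u, x, huc.measurable, ?_, ?_, ?_, ?_⟩
  · obtain ⟨M, hM⟩ := isCompact_Icc.exists_bound_of_continuousOn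
      (s := Icc (0:ℝ) tf) huc.continuousOn
    exact ⟨M, hM⟩
  · -- x 0 = x₀
    have hg0 : g 0 = Y 0 *ᵥ x₀ := by
      funext i
      show (Y 0 *ᵥ x₀) i + (∫ s in (0:ℝ)..(0:ℝ), F i s) = (Y 0 *ᵥ x₀) i
      rw [intervalIntegral.integral_same, add_zero]
    show X 0 *ᵥ g 0 = x₀
    rw [hg0, Matrix.mulVec_mulVec]
    rw [show X 0 * Y 0 = 1 from hXY 0 h0ab]
    exact Matrix.one_mulVec x₀
  · -- x tf = xf
    have hgtf : g tf = Y tf *ᵥ xf := by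
      funext i
      show (Y 0 *ᵥ x₀) i + (∫ s in (0:ℝ)..tf, F i s) = (Y tf *ᵥ xf) i
      have hFi : ∀ s, F i s = ∑ k, (∑ j, N s i j * N s k j) * p k := by
        intro s
        calc F i s = ∑ j, ∑ k, (N s i j * N s k j) * p k := by
              apply Finset.sum_congr rfl; intro j _
              show N s i j * u s j = _
              rw [huapp, Finset.mul_sum]
              apply Finset.sum_congr rfl; intro k _; ring
          _ = ∑ k, ∑ j, (N s i j * N s k j) * p k := Finset.sum_comm
          _ = ∑ k, (∑ j, N s i j * N s k j) * p k := by
              apply Finset.sum_congr rfl; intro k _; rw [Finset.sum_mul]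
      have hint : (∫ s in (0:ℝ)..tf, F i s) = (Gm *ᵥ p) i := by
        rw [hGmmul p i]
        apply intervalIntegral.integral_congr
        intro s _
        exact hFi s
      rw [hint]
      have hcomp := congrFun hp i
      rw [Pi.sub_apply] at hcomp
      rw [hcomp]
      ring
    show X tf *ᵥ g tf = xf
    rw [hgtf, Matrix.mulVec_mulVec]
    rw [show X tf * Y tf = 1 from hXY tf htfab]
    exact Matrix.one_mulVec xf
  · intro t ht
    have htIoo := hIoo t ht
    rw [hasDerivAt_pi]
    intro i
    have hgd : ∀ j, HasDerivAt (fun r => g r j) (F j t) t := by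
      intro j
      apply HasDerivAt.const_add
      exact intervalIntegral.integral_hasDerivAt_right
        ((hFc j).intervalIntegrable _ _)
        ((hFc j).stronglyMeasurableAtFilter _ _) (hFc j).continuousAt
    have hprod : HasDerivAt (fun r => ∑ j, X r i j * g r j)
        (∑ j, ((A t * X t) i j * g t j + X t i j * F j t)) t :=
      HasDerivAt.fun_sum fun j _ => (hXd i j t htIoo).mul (hgd j)
    have hfun : (fun r => x r i) = fun r => ∑ j, X r i j * g r j := by
      funext r
      show (X r *ᵥ g r) i = _
      simp [Matrix.mulVec, dotProduct]
    have hval : (A t *ᵥ x t + B t *ᵥ u t) i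
        = ∑ j, ((A t * X t) i j * g t j + X t i j * F j t) := by
      rw [Finset.sum_add_distrib, Pi.add_apply]
      congr 1
      · show (A t *ᵥ x t) i = _
        have hxt : x t = X t *ᵥ g t := rfl
        rw [hxt, Matrix.mulVec_mulVec]
        simp [Matrix.mulVec, dotProduct]
      · have hBN : X t * N t = B t := by
          show X t * (Y (cl t) * B (cl t)) = B t
          rw [hcleq t ht, ← Matrix.mul_assoc, hXY t (hsub ht), Matrix.one_mul]
        have hFj : ∀ j, F j t = (N t *ᵥ u t) j := by
          intro j
          show ∑ jj, N t j jj * u t jj = _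
          simp [Matrix.mulVec, dotProduct]
        have hstep : ((X t * N t) *ᵥ u t) i = ∑ k, X t i k * F k t := by
          have h1 : ((X t * N t) *ᵥ u t) i = ∑ j, (∑ k, X t i k * N t k j) * u t j := by
            simp [Matrix.mulVec, dotProduct, Matrix.mul_apply]
          rw [h1]
          calc ∑ j, (∑ k, X t i k * N t k j) * u t j
              = ∑ j, ∑ k, (X t i k * N t k j) * u t j := by
                apply Finset.sum_congr rfl; intro j _; rw [Finset.sum_mul]
            _ = ∑ k, ∑ j, (X t i k * N t k j) * u t j := Finset.sum_comm
            _ = ∑ k, X t i k * F k t := by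
                apply Finset.sum_congr rfl; intro k _
                show _ = X t i k * ∑ j, N t k j * u t j
                rw [Finset.mul_sum]
                apply Finset.sum_congr rfl; intro j _; ring
        calc (B t *ᵥ u t) i = ((X t * N t) *ᵥ u t) i := by rw [hBN]
          _ = ∑ j, X t i j * F j t := hstep
    rw [hfun, hval]
    exact hprod
end
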